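/- arXiv:2508.21672 — 4 statements merged into one kernel-verified Lean document; each statement's English description precedes it below -/
import Mathlib

section
/- Let 0 < ψ < 1, z > 0, y_G > 0, y_B ∈ ℝ. For (α, β) ∈ [0,1]², define A_g = (ψα + (1−ψ)β)·z, B_g = ψα·y_G + (1−ψ)β·y_B, A_b = (ψ(1−α) + (1−ψ)(1−β))·z, B_b = ψ(1−α)·y_G + (1−ψ)(1−β)·y_B. Then there exists (α, β) ∈ [0,1]² with B_g ≥ −A_g/2 and B_b ≥ −A_b/2 if and only if ψ·y_G + (1−ψ)·y_B + z/2 ≥ 0 (equivalently y_B ≥ −(ψ y_G + z/2)/(1−ψ)). Moreover, when ψ·y_G + (1−ψ)·y_B + z/2 ≥ 0, every diagonal policy α = β = η with η ∈ [0,1] satisfies both inequalities B_g ≥ −A_g/2 and B_b ≥ −A_b/2. -/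
/-- Let `0 < ψ < 1`, `z > 0`, `y_G > 0`, `y_B ∈ ℝ`. For
`(α, β) ∈ [0,1]²` define `A_g = (ψα + (1−ψ)β)z`, `B_g = ψα y_G + (1−ψ)β y_B`,
`A_b = (ψ(1−α) + (1−ψ)(1−β))z`, `B_b = ψ(1−α) y_G + (1−ψ)(1−β) y_B`. Then there exists
`(α, β) ∈ [0,1]²` with `B_g ≥ −A_g/2` and `B_b ≥ −A_b/2` iff
`ψ y_G + (1−ψ) y_B + z/2 ≥ 0` (equivalently `y_B ≥ −(ψ y_G + z/2)/(1−ψ)`). Moreover,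
when `ψ y_G + (1−ψ) y_B + z/2 ≥ 0`, every diagonal policy `α = β = η`, `η ∈ [0,1]`,
satisfies both inequalities. -/
theorem case4_feasibility_characterization
    (ψ z yG yB : ℝ) (hψ0 : 0 < ψ) (hψ1 : ψ < 1) (hz : 0 < z) (hyG : 0 < yG) :
    ((∃ α β : ℝ, 0 ≤ α ∧ α ≤ 1 ∧ 0 ≤ β ∧ β ≤ 1 ∧
        ψ * α * yG + (1 - ψ) * β * yB ≥ -((ψ * α + (1 - ψ) * β) * z) / 2 ∧
        ψ * (1 - α) * yG + (1 - ψ) * (1 - β) * yB ≥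
          -((ψ * (1 - α) + (1 - ψ) * (1 - β)) * z) / 2) ↔
      ψ * yG + (1 - ψ) * yB + z / 2 ≥ 0) ∧
    ((ψ * yG + (1 - ψ) * yB + z / 2 ≥ 0) ↔ yB ≥ -(ψ * yG + z / 2) / (1 - ψ)) ∧
    (ψ * yG + (1 - ψ) * yB + z / 2 ≥ 0 →
      ∀ η : ℝ, 0 ≤ η → η ≤ 1 →
        ψ * η * yG + (1 - ψ) * η * yB ≥ -((ψ * η + (1 - ψ) * η) * z) / 2 ∧
        ψ * (1 - η) * yG + (1 - ψ) * (1 - η) * yB ≥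
          -((ψ * (1 - η) + (1 - ψ) * (1 - η)) * z) / 2) := by
  have hψ1' : (0:ℝ) < 1 - ψ := by linarith
  constructor
  · constructor
    · rintro ⟨α, β, hα0, hα1, hβ0, hβ1, h1, h2⟩
      nlinarith [h1, h2]
    · intro h
      exact ⟨1, 1, by norm_num, by norm_num, by norm_num, by norm_num,
        by nlinarith, by nlinarith⟩
  constructor
  · rw [ge_iff_le, ge_iff_le, div_le_iff₀ hψ1']
    constructor <;> intro h <;> nlinarith
  · intro h η h0 h1
    constructor
    · nlinarith [mul_nonneg h0 h]
    · nlinarith [mul_nonneg (by linarith : (0:ℝ) ≤ 1 - η) h]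
end

section
/- Let 0 < ψ < 1, z > 0, y_G > 0, y_B ∈ ℝ, and suppose ψ·y_G + (1−ψ)·y_B + z/2 < 0. Then: (i) y_B + z/2 < 0, so −y_B − z/2 > 0; (ii) β* := ψ(y_G + z/2) / ((1−ψ)(−y_B − z/2)) satisfies 0 < β* < 1; and (iii) at the signaling policy (α, β) = (1, β*), the coefficients satisfy B_g = −A_g/2 and B_b < −A_b/2, where A_g = (ψα + (1−ψ)β)z, B_g = ψα y_G + (1−ψ)β y_B, A_b = (ψ(1−α) + (1−ψ)(1−β))z, B_b = ψ(1−α) y_G + (1−ψ)(1−β) y_B. -/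
/-- Let `0 < ψ < 1`, `z > 0`, `y_G > 0`, `y_B ∈ ℝ`, and suppose
`ψ y_G + (1−ψ) y_B + z/2 < 0`. Then: (i) `y_B + z/2 < 0`, so `−y_B − z/2 > 0`;
(ii) `β* = ψ(y_G + z/2)/((1−ψ)(−y_B − z/2))` satisfies `0 < β* < 1`; and (iii) at the
signaling policy `(α, β) = (1, β*)` the coefficients satisfy `B_g = −A_g/2` and
`B_b < −A_b/2`, where `A_g = (ψα + (1−ψ)β)z`, `B_g = ψα y_G + (1−ψ)β y_B`,
`A_b = (ψ(1−α) + (1−ψ)(1−β))z`, `B_b = ψ(1−α) y_G + (1−ψ)(1−β) y_B`. -/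
theorem case3_equilibrium_policy
    (ψ z yG yB βs : ℝ) (hψ0 : 0 < ψ) (hψ1 : ψ < 1) (hz : 0 < z) (hyG : 0 < yG)
    (hcond : ψ * yG + (1 - ψ) * yB + z / 2 < 0)
    (hβs : βs = ψ * (yG + z / 2) / ((1 - ψ) * (-yB - z / 2))) :
    (yB + z / 2 < 0) ∧ (0 < -yB - z / 2) ∧
    (0 < βs ∧ βs < 1) ∧
    (ψ * 1 * yG + (1 - ψ) * βs * yB = -((ψ * 1 + (1 - ψ) * βs) * z) / 2) ∧
    (ψ * (1 - 1) * yG + (1 - ψ) * (1 - βs) * yB <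
      -((ψ * (1 - 1) + (1 - ψ) * (1 - βs)) * z) / 2) := by

  have h1 : 1 - ψ > 0 := by linarith
  have hyb : yB + z / 2 < 0 := by nlinarith
  have hd : 0 < (1 - ψ) * (-yB - z / 2) := by nlinarith
  have hnum : 0 < ψ * (yG + z / 2) := by nlinarith
  have hβ0 : 0 < βs := by rw [hβs]; positivity
  have hβ1 : βs < 1 := by
    rw [hβs, div_lt_one hd]; nlinarith
  refine ⟨hyb, by linarith, ⟨hβ0, hβ1⟩, ?_, ?_⟩
  · have hne1 : (1 - ψ) ≠ 0 := ne_of_gt h1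
    have hne2 : -yB - z / 2 ≠ 0 := by intro h; nlinarith
    have hkey : (1 - ψ) * βs * (-yB - z / 2) = ψ * (yG + z / 2) := by
      rw [hβs, show (1 - ψ) * (ψ * (yG + z / 2) / ((1 - ψ) * (-yB - z / 2))) * (-yB - z / 2)
        = ψ * (yG + z / 2) / ((1 - ψ) * (-yB - z / 2)) * ((1 - ψ) * (-yB - z / 2)) from by ring]
      exact div_mul_cancel₀ _ (ne_of_gt hd)
    linear_combination -hkey
  · nlinarith [mul_pos (mul_pos h1 (by linarith : (0:ℝ) < 1 - βs)) (by linarith : (0:ℝ) < -(yB + z / 2))]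
end

section
/- Let ι be a finite nonempty type, let q : ι → ℝ be nonnegative with Σ_i q_i = 1, let x : ι → ℝ, let η > 0, and set μ = Σ_i q_i·x_i. If η·(x_i − μ) ≤ 1 for every i, then log(Σ_i q_i·exp(η·(x_i − μ))) ≤ η²·Σ_i q_i·(x_i − μ)² ≤ η²·Σ_i q_i·x_i². -/
lemma exp_le_quadratic {u : ℝ} (hu : u ≤ 1) : Real.exp u ≤ 1 + u + u ^ 2 := by
  rcases le_or_gt u (-1) with h | h
  · have h1 : Real.exp u ≤ 1 := by
      have := Real.exp_le_exp.mpr (h.trans (by norm_num : (-1:ℝ) ≤ 0))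
      simpa using this
    nlinarith [sq_nonneg u, sq_nonneg (1 + u)]
  · have habs : |u| ≤ 1 := abs_le.mpr ⟨h.le, hu⟩
    have hb := Real.exp_bound habs (by norm_num : 0 < 2)
    have := (abs_sub_le_iff.1 hb).1
    simp only [Finset.sum_range_succ, Finset.sum_range_zero] at this
    norm_num at this
    nlinarith [sq_nonneg u, sq_abs u]

/-- Let `ι` be a finite nonempty type, `q : ι → ℝ` nonnegative with
`∑ q_i = 1`, `x : ι → ℝ`, `η > 0`, and `μ = ∑ q_i x_i`. If `η(x_i − μ) ≤ 1` for every
`i`, then `log (∑ q_i exp(η(x_i − μ))) ≤ η² ∑ q_i (x_i − μ)² ≤ η² ∑ q_i x_i²`. -/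
theorem log_mgf_bound {ι : Type*} [Fintype ι] [Nonempty ι]
    (q x : ι → ℝ) (η μ : ℝ)
    (hq0 : ∀ i, 0 ≤ q i) (hq1 : ∑ i, q i = 1) (hη : 0 < η)
    (hμ : μ = ∑ i, q i * x i)
    (hb : ∀ i, η * (x i - μ) ≤ 1) :
    Real.log (∑ i, q i * Real.exp (η * (x i - μ))) ≤
        η ^ 2 * ∑ i, q i * (x i - μ) ^ 2 ∧
      η ^ 2 * ∑ i, q i * (x i - μ) ^ 2 ≤ η ^ 2 * ∑ i, q i * (x i) ^ 2 := by
  have hcent : ∑ i, q i * (x i - μ) = 0 := by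
    simp only [mul_sub, Finset.sum_sub_distrib, ← Finset.sum_mul, hq1]
    rw [← hμ]; ring
  constructor
  · -- first inequality
    have hSpos : 0 < ∑ i, q i * Real.exp (η * (x i - μ)) := by
      have : ∃ i, q i ≠ 0 := by
        by_contra h
        push_neg at h
        simp [h] at hq1
      obtain ⟨j, hj⟩ := this
      refine Finset.sum_pos' (fun i _ => mul_nonneg (hq0 i) (Real.exp_pos _).le)
        ⟨j, Finset.mem_univ j, mul_pos ((hq0 j).lt_of_ne (Ne.symm hj)) (Real.exp_pos _)⟩
    have hS : (∑ i, q i * Real.exp (η * (x i - μ))) ≤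
        1 + η ^ 2 * ∑ i, q i * (x i - μ) ^ 2 := by
      have hle : ∀ i ∈ Finset.univ, q i * Real.exp (η * (x i - μ)) ≤
          q i * (1 + η * (x i - μ) + (η * (x i - μ)) ^ 2) := fun i _ =>
        mul_le_mul_of_nonneg_left (exp_le_quadratic (hb i)) (hq0 i)
      calc (∑ i, q i * Real.exp (η * (x i - μ)))
          ≤ ∑ i, q i * (1 + η * (x i - μ) + (η * (x i - μ)) ^ 2) :=
            Finset.sum_le_sum hle
        _ = (∑ i, q i) + η * (∑ i, q i * (x i - μ))
              + η ^ 2 * ∑ i, q i * (x i - μ) ^ 2 := by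
            rw [Finset.mul_sum, Finset.mul_sum, ← Finset.sum_add_distrib,
              ← Finset.sum_add_distrib]
            exact Finset.sum_congr rfl fun i _ => by ring
        _ = 1 + η ^ 2 * ∑ i, q i * (x i - μ) ^ 2 := by
            rw [hq1, hcent]; ring
    calc Real.log (∑ i, q i * Real.exp (η * (x i - μ)))
        ≤ (∑ i, q i * Real.exp (η * (x i - μ))) - 1 :=
          Real.log_le_sub_one_of_pos hSpos
      _ ≤ η ^ 2 * ∑ i, q i * (x i - μ) ^ 2 := by linarith
  · -- second inequality
    have key : ∑ i, q i * (x i - μ) ^ 2 = (∑ i, q i * (x i) ^ 2) - μ ^ 2 := by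
      have : ∀ i, q i * (x i - μ) ^ 2 =
          q i * (x i) ^ 2 - 2 * μ * (q i * x i) + μ ^ 2 * q i := fun i => by ring
      simp only [this, Finset.sum_add_distrib, Finset.sum_sub_distrib,
        ← Finset.mul_sum, ← hμ, hq1]
      ring
    have := sq_nonneg μ
    nlinarith [sq_nonneg η]
end

section
/- Let ι be a finite nonempty type with cardinality K, let γ ∈ [0,1), β ≥ 0, η > 0 be real numbers, let q : ι → ℝ be nonnegative with Σ_i q_i = 1, and define p_i = (1 − γ)·q_i + γ/K. Let g : ι → ℝ satisfy, for every i, 0 ≤ g_i ≤ (1 + β)/p_i and η·g_i ≤ 1. Then −Σ_i p_i·g_i ≤ (1 + β)·η·Σ_i g_i − ((1 − γ)/η)·log(Σ_i q_i·exp(η·g_i)). -/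
lemma exp_le_one_add_add_sq {x : ℝ} (h0 : 0 ≤ x) (h1 : x ≤ 1) :
    Real.exp x ≤ 1 + x + x ^ 2 := by
  have := Real.exp_bound' h0 h1 (n := 2) (by norm_num)
  simp only [Finset.sum_range_succ, Finset.sum_range_zero] at this
  norm_num [Nat.factorial] at this
  nlinarith [sq_nonneg x]

/-- Let `ι` be a finite nonempty type of cardinality `K`,
`γ ∈ [0,1)`, `β ≥ 0`, `η > 0`, `q : ι → ℝ` nonnegative summing to 1, and
`p_i = (1 − γ) q_i + γ/K`. If `g : ι → ℝ` satisfies `0 ≤ g_i ≤ (1 + β)/p_i` and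
`η g_i ≤ 1` for every `i`, then
`−∑ p_i g_i ≤ (1 + β) η ∑ g_i − ((1 − γ)/η) log (∑ q_i exp(η g_i))`. -/
theorem one_round_potential_inequality {ι : Type*} [Fintype ι] [Nonempty ι]
    (γ β η : ℝ) (hγ0 : 0 ≤ γ) (hγ1 : γ < 1) (hβ : 0 ≤ β) (hη : 0 < η)
    (q p g : ι → ℝ)
    (hq0 : ∀ i, 0 ≤ q i) (hq1 : ∑ i, q i = 1)
    (hp : ∀ i, p i = (1 - γ) * q i + γ / (Fintype.card ι : ℝ))
    (hg0 : ∀ i, 0 ≤ g i) (hg1 : ∀ i, g i ≤ (1 + β) / p i)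
    (hηg : ∀ i, η * g i ≤ 1) :
    -∑ i, p i * g i ≤
      (1 + β) * η * ∑ i, g i -
        ((1 - γ) / η) * Real.log (∑ i, q i * Real.exp (η * g i)) := by
  have hK : (0:ℝ) < Fintype.card ι := by positivity
  have hp0 : ∀ i, 0 ≤ p i := by
    intro i; rw [hp i]
    have h1 : 0 ≤ (1 - γ) * q i := mul_nonneg (by linarith) (hq0 i)
    have h2 : 0 ≤ γ / (Fintype.card ι : ℝ) := div_nonneg hγ0 hK.le
    linarith
  -- pointwise: p i * g i ^ 2 ≤ (1 + β) * g i
  have key : ∀ i, p i * g i ^ 2 ≤ (1 + β) * g i := by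
    intro i
    rcases eq_or_lt_of_le (hp0 i) with h | h
    · have : g i ≤ 0 := by simpa [← h] using hg1 i
      have hg : g i = 0 := le_antisymm this (hg0 i)
      simp [hg, ← h]
    · have := hg1 i
      rw [le_div_iff₀ h] at this
      nlinarith [hg0 i, sq_nonneg (g i)]
  -- log bound
  have hsum_pos : (0:ℝ) < ∑ i, q i * Real.exp (η * g i) := by
    have : (1:ℝ) = ∑ i, q i * 1 := by simp [hq1]
    calc (0:ℝ) < 1 := one_pos
      _ = ∑ i, q i * 1 := this
      _ ≤ ∑ i, q i * Real.exp (η * g i) := by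
          apply Finset.sum_le_sum
          intro i _
          exact mul_le_mul_of_nonneg_left
            (Real.one_le_exp (mul_nonneg hη.le (hg0 i))) (hq0 i)
  have hlog : Real.log (∑ i, q i * Real.exp (η * g i))
      ≤ η * ∑ i, q i * g i + η ^ 2 * ∑ i, q i * g i ^ 2 := by
    have h1 := Real.log_le_sub_one_of_pos hsum_pos
    have h2 : ∑ i, q i * Real.exp (η * g i)
        ≤ ∑ i, q i * (1 + η * g i + (η * g i) ^ 2) := by
      apply Finset.sum_le_sum
      intro i _
      exact mul_le_mul_of_nonneg_left
        (exp_le_one_add_add_sq (mul_nonneg hη.le (hg0 i)) (hηg i)) (hq0 i)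
    have h3 : ∑ i, q i * (1 + η * g i + (η * g i) ^ 2)
        = 1 + (η * ∑ i, q i * g i + η ^ 2 * ∑ i, q i * g i ^ 2) := by
      have : ∀ i, q i * (1 + η * g i + (η * g i) ^ 2)
          = q i + η * (q i * g i) + η ^ 2 * (q i * g i ^ 2) := by intro i; ring
      simp only [this, Finset.sum_add_distrib, hq1, ← Finset.mul_sum]
      ring
    linarith
  -- main computation
  have hrw : ∑ i, p i * g i
      = (1 - γ) * ∑ i, q i * g i + (γ / Fintype.card ι) * ∑ i, g i := by
    rw [Finset.mul_sum, Finset.mul_sum, ← Finset.sum_add_distrib]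
    apply Finset.sum_congr rfl
    intro i _
    rw [hp i]; ring
  have hγ' : 0 ≤ 1 - γ := by linarith
  have hηinv : 0 ≤ (1 - γ) / η := by positivity
  have hlog' : ((1 - γ) / η) * Real.log (∑ i, q i * Real.exp (η * g i))
      ≤ ((1 - γ) / η) * (η * ∑ i, q i * g i + η ^ 2 * ∑ i, q i * g i ^ 2) :=
    mul_le_mul_of_nonneg_left hlog hηinv
  have hexp : ((1 - γ) / η) * (η * ∑ i, q i * g i + η ^ 2 * ∑ i, q i * g i ^ 2)
      = (1 - γ) * ∑ i, q i * g i + (1 - γ) * η * ∑ i, q i * g i ^ 2 := by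
    field_simp
  -- (1-γ) η Σ q g² ≤ (1+β) η Σ g
  have hvar : (1 - γ) * η * ∑ i, q i * g i ^ 2 ≤ (1 + β) * η * ∑ i, g i := by
    have : ∀ i, (1 - γ) * (q i * g i ^ 2) ≤ (1 + β) * g i := by
      intro i
      have hpq : (1 - γ) * q i ≤ p i := by
        rw [hp i]
        have : 0 ≤ γ / Fintype.card ι := by positivity
        linarith
      calc (1 - γ) * (q i * g i ^ 2) = ((1 - γ) * q i) * g i ^ 2 := by ring
        _ ≤ p i * g i ^ 2 := mul_le_mul_of_nonneg_right hpq (sq_nonneg _)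
        _ ≤ (1 + β) * g i := key i
    calc (1 - γ) * η * ∑ i, q i * g i ^ 2
        = η * ∑ i, (1 - γ) * (q i * g i ^ 2) := by rw [Finset.mul_sum, Finset.mul_sum]; apply Finset.sum_congr rfl; intro i _; ring
      _ ≤ η * ∑ i, (1 + β) * g i :=
          mul_le_mul_of_nonneg_left (Finset.sum_le_sum fun i _ => this i) hη.le
      _ = (1 + β) * η * ∑ i, g i := by rw [Finset.mul_sum, Finset.mul_sum]; apply Finset.sum_congr rfl; intro i _; ring
  have hgsum : 0 ≤ ∑ i, g i := Finset.sum_nonneg fun i _ => hg0 i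
  have hγK : 0 ≤ (γ / Fintype.card ι) * ∑ i, g i := by positivity
  rw [hrw]
  nlinarith [hlog', hexp, hvar, hγK]
end
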